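/- Let f be a Borel probability measure on ℝ^d, let L ≥ 2 be such that f(B̄(0,L)) ≥ 1/2, and let ε ∈ (0,1). Then for every y ∈ ℝ^d: ∫_{ℝ^d} φ_ε(x−y)(1+|x|)² f(dx) ≤ [ 2(1+2|y|+L)² + 4(|y|+L)² ] · (f ⋆ φ_ε)(y), where (f ⋆ φ_ε)(y) = ∫ φ_ε(x−y) f(dx). In particular the Gaussian-weighted second moment ∫ φ_ε(x−y)(1+|x|)² f(dx) / (f ⋆ φ_ε)(y) is bounded by C_L (1+|y|)² uniformly in ε ∈ (0,1). -/

import Mathlib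

open MeasureTheory Real Set Filter Matrix
open scoped BigOperators ENNReal Topology

noncomputable section

attribute [local instance] Matrix.normedAddCommGroup Matrix.normedSpace

abbrev Vec (d : ℕ) : Type := EuclideanSpace ℝ (Fin d)

variable {d : ℕ} {E : Type*} [MeasurableSpace E]

/-- The diffusion operator `𝒜_s φ(x) = b(s,x)·∇φ(x) + (1/2) Σ_{i,j} a_{ij}(s,x) ∂²_{ij} φ(x)`. -/
def opA (b : ℝ → Vec d → Vec d) (a : ℝ → Vec d → Matrix (Fin d) (Fin d) ℝ)
    (s : ℝ) (φ : Vec d → ℝ) (x : Vec d) : ℝ :=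
  (inner ℝ (b s x) (gradient φ x) : ℝ)
    + (1/2) * ∑ i : Fin d, ∑ j : Fin d, a s x i j *
        (iteratedFDeriv ℝ 2 φ x ![EuclideanSpace.single i 1, EuclideanSpace.single j 1])

/-- The jump operator `ℬ_s φ(x) = ∫_E (φ(x + h(s,z,x)) - φ(x)) μ(dz)`. -/
def opB (μ : Measure E) (h : ℝ → E → Vec d → Vec d) (s : ℝ) (φ : Vec d → ℝ) (x : Vec d) : ℝ :=
  ∫ z, (φ (x + h s z x) - φ x) ∂μ

/-- The growth assumption: `|σ(t,x)| + |b(t,x)| + ∫_E |h(t,z,x)| μ(dz) ≤ C₀ (1+|x|)`. -/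
def GrowthCond (T : ℝ) (μ : Measure E) (σ : ℝ → Vec d → Matrix (Fin d) (Fin d) ℝ)
    (b : ℝ → Vec d → Vec d) (h : ℝ → E → Vec d → Vec d) (C₀ : ℝ) : Prop :=
  ∀ t ∈ Icc (0:ℝ) T, ∀ x : Vec d, ‖σ t x‖ + ‖b t x‖ + (∫ z, ‖h t z x‖ ∂μ) ≤ C₀ * (1 + ‖x‖)

/-- `(f_t)` is a measurable family of measures, for `t ∈ [0,T]`. -/
def MeasFamily (T : ℝ) (f : ℝ → Measure (Vec d)) : Prop :=
  ∀ s : Set (Vec d), MeasurableSet s → Measurable fun t : Icc (0:ℝ) T => f t s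

/-- `(f_t)_{t ∈ [0,T]}` is a weak solution of the Fokker-Planck equation
`∂_t f = -div(b f) + (1/2) Σ ∂_{ij}(a_{ij} f) + ℒ f`. -/
def IsWeakSol (T : ℝ) (μ : Measure E) (b : ℝ → Vec d → Vec d)
    (a : ℝ → Vec d → Matrix (Fin d) (Fin d) ℝ) (h : ℝ → E → Vec d → Vec d)
    (f : ℝ → Measure (Vec d)) : Prop :=
  MeasFamily T f ∧ (∀ t ∈ Icc (0:ℝ) T, IsProbabilityMeasure (f t)) ∧
  ∀ φ : Vec d → ℝ, ContDiff ℝ 2 φ → HasCompactSupport φ → ∀ t ∈ Icc (0:ℝ) T,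
    ∫ x, φ x ∂(f t) = (∫ x, φ x ∂(f 0))
      + ∫ s in (0:ℝ)..t, ∫ x, (opA b a s φ x + opB μ h s φ x) ∂(f s)

/-- Uniformly bounded first moments: `(f_t) ∈ L^∞([0,T], 𝒫₁(ℝ^d))`. -/
def FinFirstMoments (T : ℝ) (f : ℝ → Measure (Vec d)) : Prop :=
  ∃ M : ℝ, ∀ t ∈ Icc (0:ℝ) T, ∫⁻ x, ‖x‖₊ ∂(f t) ≤ ENNReal.ofReal M

/-- The centered Gaussian density with covariance `ε Id`. -/
def gauss (d : ℕ) (ε : ℝ) (x : Vec d) : ℝ :=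
  (2 * π * ε) ^ (-(d:ℝ)/2) * Real.exp (-‖x‖^2 / (2*ε))

/-- `f_t^ε(y) = (f_t ⋆ φ_ε)(y)`. -/
def freg (f : ℝ → Measure (Vec d)) (ε t : ℝ) (y : Vec d) : ℝ :=
  ∫ x, gauss d ε (x - y) ∂(f t)

/-- `a^ε(t,y) = (f_t^ε(y))⁻¹ ∫ φ_ε(x-y) a(t,x) f_t(dx)`. -/
def areg (f : ℝ → Measure (Vec d)) (a : ℝ → Vec d → Matrix (Fin d) (Fin d) ℝ)
    (ε t : ℝ) (y : Vec d) : Matrix (Fin d) (Fin d) ℝ :=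
  Matrix.of fun i j => (freg f ε t y)⁻¹ * ∫ x, gauss d ε (x - y) * a t x i j ∂(f t)

/-- `b^ε(t,y) = (f_t^ε(y))⁻¹ ∫ φ_ε(x-y) b(t,x) f_t(dx)`. -/
def breg (f : ℝ → Measure (Vec d)) (b : ℝ → Vec d → Vec d) (ε t : ℝ) (y : Vec d) : Vec d :=
  (freg f ε t y)⁻¹ • ∫ x, gauss d ε (x - y) • b t x ∂(f t)

/-- `F_t^ε(x,y) = φ_ε(x-y) / f_t^ε(y)`. -/
def Freg (f : ℝ → Measure (Vec d)) (ε t : ℝ) (x y : Vec d) : ℝ :=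
  gauss d ε (x - y) / freg f ε t y

/-- The regularized jump operator `ℬ_{t,ε}`. -/
def opBreg (μ : Measure E) (h : ℝ → E → Vec d → Vec d) (f : ℝ → Measure (Vec d))
    (ε t : ℝ) (ψ : Vec d → ℝ) (y : Vec d) : ℝ :=
  ∫ z, ∫ x, (ψ (y + h t z x) - ψ y) * Freg f ε t x y ∂(f t) ∂μ


/-- Entrywise measurability of a matrix-valued coefficient. -/
def MeasurableMat {d : ℕ} (σ : ℝ → Vec d → Matrix (Fin d) (Fin d) ℝ) : Prop :=
  ∀ i j : Fin d, Measurable fun p : ℝ × Vec d => σ p.1 p.2 i j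

/-! Split the integral at `‖x‖ = 2‖y‖ + L`. Inside, `(1 + ‖x‖)² ≤ (1 + 2‖y‖ + L)²`.
Outside, `x ∉ B̄(0, L)`, `1 + ‖x‖ ≤ 2‖x - y‖` and `‖x - y‖ ≥ a := ‖y‖ + L ≥ √(2ε)`,
so the decay of `r ↦ r² φ_ε(r)` beyond `√(2ε)` bounds the integrand by `4 a² φ_ε(a)`.
Finally the mass of `f` outside the ball is at most its mass inside,
and `φ_ε(a) f(B̄(0, L)) ≤ (f ⋆ φ_ε)(y)`. -/

def gaussRadial (d : ℕ) (ε r : ℝ) : ℝ := (2 * π * ε) ^ (-(d:ℝ)/2) * Real.exp (-r^2 / (2*ε))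

section GaussRadial

variable {ε : ℝ}

lemma gauss_eq_gaussRadial (x : Vec d) : gauss d ε x = gaussRadial d ε ‖x‖ := rfl

lemma gaussRadial_nonneg (hε : 0 ≤ ε) (r : ℝ) : 0 ≤ gaussRadial d ε r := by
  unfold gaussRadial; positivity

lemma gauss_nonneg (hε : 0 ≤ ε) (x : Vec d) : 0 ≤ gauss d ε x := gaussRadial_nonneg hε _

lemma gaussRadial_le (hε : 0 ≤ ε) (r : ℝ) : gaussRadial d ε r ≤ (2 * π * ε) ^ (-(d:ℝ)/2) := by
  unfold gaussRadial
  refine mul_le_of_le_one_right (by positivity) (Real.exp_le_one_iff.mpr ?_)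
  exact div_nonpos_of_nonpos_of_nonneg (neg_nonpos.mpr (sq_nonneg r)) (by positivity)

lemma gaussRadial_antitoneOn (hε : 0 ≤ ε) : AntitoneOn (gaussRadial d ε) (Ici 0) := by
  intro a ha b _ hab
  unfold gaussRadial
  gcongr

/-- Writing `b² = a² + 2εu`, the condition `2ε ≤ a²` gives `b² ≤ a² (1 + u) ≤ a² eᵘ`. -/
lemma sq_mul_gaussRadial_antitoneOn (hε : 0 < ε) :
    AntitoneOn (fun r => r^2 * gaussRadial d ε r) (Ici √(2 * ε)) := by
  intro a ha b _ hab
  obtain ⟨ha0, hεa⟩ := Real.sqrt_le_iff.mp ha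
  set u := (b^2 - a^2) / (2 * ε)
  have hu : 0 ≤ u := div_nonneg (by nlinarith) (by positivity)
  have hb : b^2 ≤ a^2 * Real.exp u :=
    calc b^2 = a^2 + 2 * ε * u := by
          rw [mul_div_cancel₀ _ (by positivity : 2 * ε ≠ 0)]; ring
      _ ≤ a^2 * (u + 1) := by nlinarith
      _ ≤ a^2 * Real.exp u := by gcongr; exact Real.add_one_le_exp u
  have hexp : Real.exp u * Real.exp (-b^2 / (2*ε)) = Real.exp (-a^2 / (2*ε)) := by
    rw [← Real.exp_add]; congr 1; ring
  calc b^2 * gaussRadial d ε b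
      ≤ a^2 * Real.exp u * gaussRadial d ε b := by
        gcongr; exact gaussRadial_nonneg hε.le b
    _ = a^2 * gaussRadial d ε a := by
        simp only [gaussRadial, ← hexp]; ring

end GaussRadial

@[fun_prop]
lemma continuous_gauss (ε : ℝ) : Continuous (gauss d ε) := by
  unfold gauss; fun_prop

section GaussianAverage

variable {ε : ℝ} (f : Measure (Vec d)) [IsFiniteMeasure f]

lemma integrable_gauss_sub (hε : 0 ≤ ε) (y : Vec d) :
    Integrable (fun x => gauss d ε (x - y)) f := by
  refine (integrable_const ((2 * π * ε) ^ (-(d:ℝ)/2))).mono' ?_ (ae_of_all _ fun x => ?_)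
  · exact Continuous.aestronglyMeasurable (by fun_prop)
  · rw [gauss_eq_gaussRadial, Real.norm_of_nonneg (gaussRadial_nonneg hε _)]
    exact gaussRadial_le hε _

lemma gaussRadial_mul_measureReal_closedBall_le_integral (hε : 0 ≤ ε) (y : Vec d) (L : ℝ) :
    gaussRadial d ε (‖y‖ + L) * f.real (Metric.closedBall 0 L)
      ≤ ∫ x, gauss d ε (x - y) ∂f := by
  have hpt : ∀ x, (Metric.closedBall 0 L).indicator (fun _ => gaussRadial d ε (‖y‖ + L)) x
      ≤ gauss d ε (x - y) := by
    intro x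
    by_cases hx : x ∈ Metric.closedBall 0 L
    · rw [indicator_of_mem hx]
      have hxL : ‖x‖ ≤ L := mem_closedBall_zero_iff.mp hx
      exact gaussRadial_antitoneOn hε (norm_nonneg _)
        (mem_Ici.mpr (add_nonneg (norm_nonneg y) ((norm_nonneg x).trans hxL)))
        ((norm_sub_le x y).trans (by linarith))
    · rw [indicator_of_notMem hx]
      exact gaussRadial_nonneg hε _
  calc gaussRadial d ε (‖y‖ + L) * f.real (Metric.closedBall 0 L)
      = ∫ x, (Metric.closedBall 0 L).indicator (fun _ => gaussRadial d ε (‖y‖ + L)) x ∂f := by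
        rw [integral_indicator_const _ measurableSet_closedBall, smul_eq_mul, mul_comm]
    _ ≤ ∫ x, gauss d ε (x - y) ∂f :=
        integral_mono ((integrable_const _).indicator measurableSet_closedBall)
          (integrable_gauss_sub f hε y) hpt

lemma gauss_sub_mul_one_add_norm_sq_le (hε : 0 < ε) {L : ℝ} (hL : 1 ≤ L) {y : Vec d}
    (hyL : √(2 * ε) ≤ ‖y‖ + L) (x : Vec d) :
    gauss d ε (x - y) * (1 + ‖x‖)^2
      ≤ (1 + 2*‖y‖ + L)^2 * gauss d ε (x - y)
        + (Metric.closedBall 0 L)ᶜ.indicator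
            (fun _ => 4 * (‖y‖ + L)^2 * gaussRadial d ε (‖y‖ + L)) x := by
  have hg := gaussRadial_nonneg (d := d) hε.le ‖x - y‖
  have ha := gaussRadial_nonneg (d := d) hε.le (‖y‖ + L)
  have hxy := norm_sub_norm_le x y
  rw [gauss_eq_gaussRadial]
  by_cases hx : ‖x‖ ≤ 2*‖y‖ + L
  · have hsq : (1 + ‖x‖)^2 ≤ (1 + 2*‖y‖ + L)^2 :=
      pow_le_pow_left₀ (by positivity) (by linarith) 2
    have hind : 0 ≤ (Metric.closedBall 0 L)ᶜ.indicator
        (fun _ => 4 * (‖y‖ + L)^2 * gaussRadial d ε (‖y‖ + L)) x :=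
      indicator_nonneg (fun _ _ => by positivity) x
    nlinarith
  · rw [not_le] at hx
    have hxB : x ∈ (Metric.closedBall (0 : Vec d) L)ᶜ := by
      rw [mem_compl_iff, mem_closedBall_zero_iff, not_le]; linarith [norm_nonneg y]
    rw [indicator_of_mem hxB]
    have hfar : ‖y‖ + L ≤ ‖x - y‖ := by linarith
    have hsq : (1 + ‖x‖)^2 ≤ 4 * ‖x - y‖^2 := by nlinarith [norm_nonneg x]
    have hdecay := sq_mul_gaussRadial_antitoneOn (d := d) hε hyL (hyL.trans hfar) hfar
    nlinarith

theorem integral_gauss_sub_mul_one_add_norm_sq_le (hε : 0 < ε) {L : ℝ} (hL : 1 ≤ L)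
    {y : Vec d} (hyL : √(2 * ε) ≤ ‖y‖ + L)
    (hf : f.real (Metric.closedBall 0 L)ᶜ ≤ f.real (Metric.closedBall 0 L)) :
    ∫ x, gauss d ε (x - y) * (1 + ‖x‖)^2 ∂f
      ≤ ((1 + 2*‖y‖ + L)^2 + 4 * (‖y‖ + L)^2) * ∫ x, gauss d ε (x - y) ∂f := by
  set B := Metric.closedBall (0 : Vec d) L
  set K := 4 * (‖y‖ + L)^2 * gaussRadial d ε (‖y‖ + L)
  have hK : 0 ≤ K := by have := gaussRadial_nonneg (d := d) hε.le (‖y‖ + L); positivity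
  have hg := integrable_gauss_sub f hε.le y
  have hind : Integrable (Bᶜ.indicator fun _ => K) f :=
    (integrable_const K).indicator measurableSet_closedBall.compl
  have hdom := (hg.const_mul ((1 + 2*‖y‖ + L)^2)).add hind
  have hpt := gauss_sub_mul_one_add_norm_sq_le hε hL hyL
  have hint : Integrable (fun x => gauss d ε (x - y) * (1 + ‖x‖)^2) f := by
    refine hdom.mono' (Continuous.aestronglyMeasurable (by fun_prop)) (ae_of_all _ fun x => ?_)
    rw [Real.norm_of_nonneg (mul_nonneg (gauss_nonneg hε.le _) (sq_nonneg _))]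
    exact hpt x
  have htail : f.real Bᶜ * K ≤ 4 * (‖y‖ + L)^2 * ∫ x, gauss d ε (x - y) ∂f :=
    calc f.real Bᶜ * K ≤ f.real B * K := mul_le_mul_of_nonneg_right hf hK
      _ = 4 * (‖y‖ + L)^2 * (gaussRadial d ε (‖y‖ + L) * f.real B) := by ring
      _ ≤ 4 * (‖y‖ + L)^2 * ∫ x, gauss d ε (x - y) ∂f := by
          gcongr; exact gaussRadial_mul_measureReal_closedBall_le_integral f hε.le y L
  calc ∫ x, gauss d ε (x - y) * (1 + ‖x‖)^2 ∂f
      ≤ ∫ x, ((1 + 2*‖y‖ + L)^2 * gauss d ε (x - y) + Bᶜ.indicator (fun _ => K) x) ∂f :=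
        integral_mono hint hdom hpt
    _ = (1 + 2*‖y‖ + L)^2 * (∫ x, gauss d ε (x - y) ∂f) + f.real Bᶜ * K := by
        rw [integral_add (hg.const_mul _) hind, integral_const_mul,
          integral_indicator_const _ measurableSet_closedBall.compl, smul_eq_mul]
    _ ≤ _ := by linarith

end GaussianAverage

lemma two_mul_sq_add_four_mul_sq_le {t L : ℝ} (ht : 0 ≤ t) (hL : 1 ≤ L) :
    2 * (1 + 2*t + L)^2 + 4 * (t + L)^2 ≤ (2 * (1 + L)^2 + 4 * L^2) * (1 + t)^2 := by
  have h1 : 1 + 2*t + L ≤ (1 + L) * (1 + t) := by nlinarith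
  have h2 : t + L ≤ L * (1 + t) := by nlinarith
  calc 2 * (1 + 2*t + L)^2 + 4 * (t + L)^2
      ≤ 2 * ((1 + L) * (1 + t))^2 + 4 * (L * (1 + t))^2 := by gcongr
    _ = (2 * (1 + L)^2 + 4 * L^2) * (1 + t)^2 := by ring

/-- Gaussian-weighted second moment bound. -/
theorem stmt13 {d : ℕ} (f : Measure (Vec d)) [IsProbabilityMeasure f]
    (L : ℝ) (hL : 2 ≤ L) (hfL : (1/2 : ℝ≥0∞) ≤ f (Metric.closedBall 0 L)) :
    (∀ ε ∈ Ioo (0:ℝ) 1, ∀ y : Vec d,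
      ∫ x, gauss d ε (x - y) * (1 + ‖x‖)^2 ∂f
        ≤ (2 * (1 + 2*‖y‖ + L)^2 + 4 * (‖y‖ + L)^2) * ∫ x, gauss d ε (x - y) ∂f) ∧
    ∃ C : ℝ, ∀ ε ∈ Ioo (0:ℝ) 1, ∀ y : Vec d,
      ∫ x, gauss d ε (x - y) * (1 + ‖x‖)^2 ∂f
        ≤ C * (1 + ‖y‖)^2 * ∫ x, gauss d ε (x - y) ∂f := by
  have hball : f.real (Metric.closedBall 0 L)ᶜ ≤ f.real (Metric.closedBall 0 L) := by
    have hhalf : (1/2 : ℝ) ≤ f.real (Metric.closedBall 0 L) := by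
      simpa [measureReal_def] using ENNReal.toReal_mono (measure_ne_top f _) hfL
    rw [probReal_compl_eq_one_sub measurableSet_closedBall]
    linarith
  have hbound : ∀ ε ∈ Ioo (0:ℝ) 1, ∀ y : Vec d,
      ∫ x, gauss d ε (x - y) * (1 + ‖x‖)^2 ∂f
        ≤ (2 * (1 + 2*‖y‖ + L)^2 + 4 * (‖y‖ + L)^2) * ∫ x, gauss d ε (x - y) ∂f := by
    intro ε hε y
    have hyL : √(2 * ε) ≤ ‖y‖ + L :=
      Real.sqrt_le_iff.mpr ⟨by positivity, by nlinarith [norm_nonneg y, hε.2]⟩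
    have hI : 0 ≤ ∫ x, gauss d ε (x - y) ∂f := integral_nonneg fun x => gauss_nonneg hε.1.le _
    refine (integral_gauss_sub_mul_one_add_norm_sq_le f hε.1 (by linarith) hyL hball).trans ?_
    gcongr
    linarith [sq_nonneg (1 + 2*‖y‖ + L)]
  refine ⟨hbound, 2 * (1 + L)^2 + 4 * L^2, fun ε hε y => (hbound ε hε y).trans ?_⟩
  have hI : 0 ≤ ∫ x, gauss d ε (x - y) ∂f := integral_nonneg fun x => gauss_nonneg hε.1.le _
  gcongr
  exact two_mul_sq_add_four_mul_sq_le (norm_nonneg y) (by linarith)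

end
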